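/- arXiv:1111.0249 — 2 statements merged into one kernel-verified Lean document; each statement's English description precedes it below -/
import Mathlib

section
/- Let ι be an infinite type and let w : ι → ℕ be a weight function such that w(i) ≥ 1 for every i and such that for every D ∈ ℕ the set {i : w(i) ≤ D} is finite. For n ∈ ℕ let M_w(n) denote the number of finitely supported functions c : ι → ℕ with Σ_i c(i)·w(i) = n. Then each M_w(n) is finite, and M_w grows faster than any polynomial: for all C, g ∈ ℕ there exists n ∈ ℕ with M_w(n) > C·n^g. -/
/-! An exponent vector of weight `n` is supported on the finite set `{i | w i ≤ n}` with entries
at most `n`, so there are finitely many. For the growth, fix `g + 2` indices and let `W` be the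
product of their weights: multiplying the `j`-th entry by `W / w j` turns a composition of `N`
into `g + 2` parts into an exponent vector of weight `W * N`. A composition of `(g + 1) * m` is
free in its first `g + 1` parts within `[0, m]`, so there are at least `(m + 1) ^ (g + 1)` of them,
while for `m = C * (W * (g + 1)) ^ g` the bound `C * (W * (g + 1) * m) ^ g` is exactly
`m ^ (g + 1)`. -/

namespace Finsupp

variable {ι κ : Type*}

theorem finite_of_nat_weight_eq_of_finite_le {w : ι → ℕ} (hw : ∀ i, w i ≠ 0) {n : ℕ}
    (hfin : {i | w i ≤ n}.Finite) : {c : ι →₀ ℕ | weight w c = n}.Finite := by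
  classical
  refine (Set.finite_Iic (indicator hfin.toFinset fun _ _ => n)).subset fun c hc => ?_
  rw [Set.mem_ofPred_eq] at hc
  refine le_def.mpr fun i => ?_
  rw [indicator_apply]
  by_cases hci : c i = 0
  · simp [hci]
  · have hi : i ∈ hfin.toFinset := by simpa [hc] using le_weight_of_ne_zero' w hci
    simpa [hi, hc] using le_weight w (hw i) c

theorem ncard_weight_comp_le (w : ι → ℕ) (F : κ ↪ ι) {n : ℕ}
    (hfin : {c : ι →₀ ℕ | weight w c = n}.Finite) :
    {c : κ →₀ ℕ | weight (w ∘ F) c = n}.ncard ≤ {c : ι →₀ ℕ | weight w c = n}.ncard := by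
  refine Set.ncard_le_ncard_of_injOn (embDomain F) (fun c hc => ?_)
    (embDomain_injective F).injOn hfin
  change linearCombination ℕ w (embDomain F c) = n
  rw [linearCombination_embDomain]
  exact hc

theorem ncard_degree_le_ncard_weight_mul [Finite κ] {w : κ → ℕ} {W : ℕ} (hW : W ≠ 0)
    (hdvd : ∀ j, w j ∣ W) (N : ℕ) :
    {c : κ →₀ ℕ | degree c = N}.ncard ≤ {c : κ →₀ ℕ | weight w c = W * N}.ncard := by
  have := Fintype.ofFinite κ
  have hw : ∀ j, w j ≠ 0 := fun j => ne_zero_of_dvd_ne_zero hW (hdvd j)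
  have hq : ∀ j, W / w j * w j = W := fun j => Nat.div_mul_cancel (hdvd j)
  have hq0 : ∀ j, W / w j ≠ 0 := fun j h => hW (by simpa [h] using (hq j).symm)
  let scale (c : κ →₀ ℕ) : κ →₀ ℕ := equivFunOnFinite.symm fun j => c j * (W / w j)
  refine Set.ncard_le_ncard_of_injOn scale (fun c hc => ?_) (fun c _ c' _ h => ?_)
    (finite_of_nat_weight_eq w hw _)
  · rw [Set.mem_ofPred_eq, weight_eq_sum, ← hc, degree_eq_sum, Finset.mul_sum]
    refine Finset.sum_congr rfl fun j _ => ?_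
    simp only [scale, coe_equivFunOnFinite_symm, smul_eq_mul]
    rw [mul_assoc, hq, mul_comm]
  · ext j
    exact Nat.eq_of_mul_eq_mul_right (Nat.pos_of_ne_zero (hq0 j)) (DFunLike.congr_fun h j)

theorem pow_le_ncard_degree_eq (k m : ℕ) :
    (m + 1) ^ k ≤ {c : Fin (k + 1) →₀ ℕ | degree c = k * m}.ncard := by
  let compose (a : Fin k → Fin (m + 1)) : Fin (k + 1) →₀ ℕ :=
    equivFunOnFinite.symm (Fin.snoc (fun j => (a j : ℕ)) (k * m - ∑ j, (a j : ℕ)))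
  have hsum (a : Fin k → Fin (m + 1)) : ∑ j, (a j : ℕ) ≤ k * m := by
    simpa using Finset.sum_le_sum fun j (_ : j ∈ Finset.univ) => Nat.lt_succ_iff.mp (a j).isLt
  have hcard : (Set.univ : Set (Fin k → Fin (m + 1))).ncard = (m + 1) ^ k := by
    simp [Set.ncard_univ]
  rw [← hcard]
  refine Set.ncard_le_ncard_of_injOn compose (fun a _ => ?_) (fun a _ a' _ h => ?_)
    (finite_of_degree_eq _)
  · simp [compose, degree_eq_sum, Fin.sum_univ_castSucc, Nat.add_sub_cancel' (hsum a)]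
  · funext j
    exact Fin.ext (by simpa [compose] using DFunLike.congr_fun h j.castSucc)

end Finsupp

open Finsupp in
/-- Let `ι` be an infinite type and let `w : ι → ℕ` be a weight function such that
`w i ≥ 1` for every `i` and such that for every `D ∈ ℕ` the set `{i | w i ≤ D}` is
finite.  For `n ∈ ℕ` let `M_w(n)` denote the number of finitely supported functions
`c : ι → ℕ` with `Σ_i c(i)·w(i) = n`.  Then each `M_w(n)` is finite, and `M_w` grows
faster than any polynomial: for all `C, g ∈ ℕ` there exists `n ∈ ℕ` with
`M_w(n) > C·n^g`. -/
theorem weighted_partition_count_superpolynomial (ι : Type*) [Infinite ι] (w : ι → ℕ)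
    (hw1 : ∀ i, 1 ≤ w i) (hwfin : ∀ D : ℕ, {i : ι | w i ≤ D}.Finite) :
    (∀ n : ℕ, {c : ι →₀ ℕ | (c.sum fun i m => m * w i) = n}.Finite) ∧
      ∀ C g : ℕ, ∃ n : ℕ,
        C * n ^ g < {c : ι →₀ ℕ | (c.sum fun i m => m * w i) = n}.ncard := by
  -- `weight w c` unfolds to `c.sum fun i m => m • w i`, definitionally the sum in the statement.
  have hfin (n : ℕ) : {c : ι →₀ ℕ | weight w c = n}.Finite :=
    finite_of_nat_weight_eq_of_finite_le (fun i => Nat.one_le_iff_ne_zero.mp (hw1 i)) (hwfin n)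
  refine ⟨hfin, fun C g => ?_⟩
  let F : Fin (g + 2) ↪ ι := Fin.valEmbedding.trans (Infinite.natEmbedding ι)
  let W := ∏ j, w (F j)
  have hW : W ≠ 0 :=
    Finset.prod_ne_zero_iff.mpr fun j _ => Nat.one_le_iff_ne_zero.mp (hw1 (F j))
  obtain ⟨m, hm⟩ : ∃ m, m = C * (W * (g + 1)) ^ g := ⟨_, rfl⟩
  refine ⟨W * ((g + 1) * m), ?_⟩
  calc
    C * (W * ((g + 1) * m)) ^ g = C * (W * (g + 1)) ^ g * m ^ g := by
      rw [← mul_assoc W, mul_pow, mul_assoc]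
    _ = m ^ (g + 1) := by rw [← hm, pow_succ']
    _ < (m + 1) ^ (g + 1) := Nat.pow_lt_pow_left m.lt_succ_self g.succ_ne_zero
    _ ≤ {c : Fin (g + 2) →₀ ℕ | degree c = (g + 1) * m}.ncard := pow_le_ncard_degree_eq _ _
    _ ≤ {c | weight (w ∘ F) c = W * ((g + 1) * m)}.ncard :=
      ncard_degree_le_ncard_weight_mul hW (fun j => Finset.dvd_prod_of_mem _ (Finset.mem_univ j)) _
    _ ≤ _ := ncard_weight_comp_le w F (hfin _)
end

section
/- Fix an integer k ≥ 2. Let S denote the set of admissible sequences I (including the empty sequence) with excess e(I) < k, and weight each I ∈ S by w(I) = k + |I|. For n ∈ ℕ let M_k(n) denote the number of finitely supported functions c : S → ℕ with Σ_{I∈S} c(I)·(k + |I|) = n. Then: (i) S is infinite, each weight w(I) = k + |I| is positive, and for each D the set {I ∈ S : w(I) ≤ D} is finite, so each M_k(n) is finite; and (ii) for every commutative ℕ-graded algebra A over F₂ = Z/2 generated as an F₂-algebra by finitely many homogeneous elements of degree ≥ 1, there exists n ∈ ℕ with M_k(n) > dim_{F₂} A_n. -/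
/-!
`dim A_n` is at most the number of monomials of weighted degree `n` in the `g` generators of `A`,
hence at most `(n + 1) ^ g`, while `M_k(n)` counts monomials of degree `n` in the generators
`Sq^I(ι_k)`: infinitely many (`I = (2^{r-1}, …, 2, 1)` has excess `1 < k`), finitely many in each
degree. Already `g + 2` of them, of weights `w_j`, give superpolynomially many: with
`L = ∏ w_j`, the exponents `(L / w_j) t_j` with `∑ t_j = (g + 1) s` give at least
`(s + 1) ^ (g + 1)` monomials of degree `(g + 1) s L`, and for `s = ((g + 1) L) ^ g` this exceeds
`((g + 1) s L + 1) ^ g`.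
-/

def IsAdmissible (I : List ℕ) : Prop :=
  (∀ i ∈ I, 0 < i) ∧ I.Chain' (fun a b => 2 * b ≤ a)

def excess : List ℕ → ℤ
  | [] => 0
  | i :: t => 2 * (i : ℤ) - ((i : ℤ) + (t.sum : ℤ))

def AdmBelow (k : ℕ) : Type :=
  {I : List ℕ // IsAdmissible I ∧ excess I < (k : ℤ)}

def admWeight (k : ℕ) (I : AdmBelow k) : ℕ :=
  k + I.1.sum

theorem Nat.pow_mul_add_one_pow_lt {C : ℕ} (hC : 0 < C) (g : ℕ) :
    (C ^ g * C + 1) ^ g < (C ^ g + 1) ^ (g + 1) := by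
  set s := C ^ g
  calc (s * C + 1) ^ g ≤ (C * (s + 1)) ^ g := Nat.pow_le_pow_left (by nlinarith) g
    _ = s * (s + 1) ^ g := by rw [mul_pow]
    _ < (s + 1) * (s + 1) ^ g := Nat.mul_lt_mul_of_pos_right (Nat.lt_succ_self s) (by positivity)
    _ = (s + 1) ^ (g + 1) := by ring

namespace Finsupp

variable {ι κ : Type*} {w : ι → ℕ}

theorem finite_setOf_weight_eq (hw : ∀ i, w i ≠ 0) (hfin : ∀ D, {i | w i ≤ D}.Finite) (n : ℕ) :
    {c : ι →₀ ℕ | weight w c = n}.Finite := by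
  let S := {i | w i ≤ n}
  have : Finite S := (hfin n).to_subtype
  have hsupp : ∀ c : ι →₀ ℕ, weight w c = n → ∀ i ∉ S, c i = 0 := fun c hc i hi => by
    by_contra h
    exact hi (show w i ≤ n from hc ▸ le_weight_of_ne_zero' w h)
  refine Set.Finite.of_injOn (f := subtypeDomain (· ∈ S)) (fun c hc => ?_)
    (fun c hc c' hc' h => ?_) (finite_of_nat_weight_eq (w ∘ (↑) : S → ℕ) (fun i => hw i) n)
  · rw [Set.mem_ofPred, weight_apply, ← hc, weight_apply]
    exact sum_subtypeDomain_index (h := fun i m => m • w i)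
      fun i hi => by_contra fun h => mem_support_iff.mp hi (hsupp c hc i h)
  · ext i
    by_cases hi : i ∈ S
    · exact DFunLike.congr_fun h ⟨i, hi⟩
    · rw [hsupp c hc i hi, hsupp c' hc' i hi]

theorem weight_embDomain (e : κ ↪ ι) (d : κ →₀ ℕ) :
    weight w (embDomain e d) = weight (w ∘ e) d := by
  simp only [weight_apply, sum_embDomain, Function.comp_apply]

theorem ncard_setOf_weight_comp_le (e : κ ↪ ι) {n : ℕ}
    (h : {c : ι →₀ ℕ | weight w c = n}.Finite) :
    {d : κ →₀ ℕ | weight (w ∘ e) d = n}.ncard ≤ {c : ι →₀ ℕ | weight w c = n}.ncard :=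
  Set.ncard_le_ncard_of_injOn (embDomain e) (fun d hd => (weight_embDomain e d).trans hd)
    (embDomain_injective e).injOn h

theorem ncard_setOf_weight_eq_le [Fintype ι] (hw : ∀ i, w i ≠ 0) (n : ℕ) :
    {c : ι →₀ ℕ | weight w c = n}.ncard ≤ (n + 1) ^ Fintype.card ι := by
  classical
  calc {c : ι →₀ ℕ | weight w c = n}.ncard
      ≤ (↑(Fintype.piFinset fun _ : ι => Finset.range (n + 1)) : Set (ι → ℕ)).ncard :=
        Set.ncard_le_ncard_of_injOn (⇑) (fun c (hc : weight w c = n) => by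
          simpa [Nat.lt_succ_iff, ← hc] using fun i => le_weight w (hw i) c)
          DFunLike.coe_injective.injOn
    _ = (n + 1) ^ Fintype.card ι := by rw [Set.ncard_coe_finset]; simp

theorem ncard_setOf_degree_eq_le_ncard_setOf_weight_eq_mul [Fintype κ] {v : κ → ℕ} {L : ℕ}
    (hL : L ≠ 0) (hv : ∀ j, v j ∣ L) (T : ℕ) :
    {t : κ →₀ ℕ | degree t = T}.ncard ≤ {c : κ →₀ ℕ | weight v c = T * L}.ncard := by
  have hv₀ : ∀ j, v j ≠ 0 := fun j h => hL (Nat.eq_zero_of_zero_dvd (h ▸ hv j))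
  have hq : ∀ j, 0 < L / v j := fun j =>
    Nat.div_pos (Nat.le_of_dvd (Nat.pos_of_ne_zero hL) (hv j)) (Nat.pos_of_ne_zero (hv₀ j))
  refine Set.ncard_le_ncard_of_injOn (fun t => equivFunOnFinite.symm fun j => t j * (L / v j))
    (fun t (ht : degree t = T) => ?_) (fun t _ t' _ h => ?_) (finite_of_nat_weight_eq v hv₀ _)
  · simp only [Set.mem_ofPred, weight_eq_sum, coe_equivFunOnFinite_symm, smul_eq_mul, mul_assoc,
      Nat.div_mul_cancel (hv _), ← Finset.sum_mul, ← degree_eq_sum, ht]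
  · ext j
    exact Nat.eq_of_mul_eq_mul_right (hq j) (DFunLike.congr_fun h j)

theorem pow_le_ncard_setOf_degree_eq (N s : ℕ) :
    (s + 1) ^ N ≤ {t : Fin (N + 1) →₀ ℕ | degree t = N * s}.ncard := by
  classical
  let B := Fintype.piFinset fun _ : Fin N => Finset.range (s + 1)
  have hB : ∀ b ∈ B, ∑ i, b i ≤ N * s := fun b hb => by
    simpa using Finset.sum_le_card_nsmul Finset.univ b s fun i _ =>
      Nat.lt_succ_iff.mp (Finset.mem_range.mp (Fintype.mem_piFinset.mp hb i))
  calc (s + 1) ^ N = (B : Set (Fin N → ℕ)).ncard := by rw [Set.ncard_coe_finset]; simp [B]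
    _ ≤ _ := Set.ncard_le_ncard_of_injOn
        (fun b => equivFunOnFinite.symm (Fin.snoc b (N * s - ∑ i, b i)))
        (fun b hb => by
          simp only [Set.mem_ofPred, degree_eq_sum, coe_equivFunOnFinite_symm,
            Fin.sum_univ_castSucc, Fin.snoc_castSucc, Fin.snoc_last]
          have := hB b hb
          omega)
        (fun b _ b' _ h => funext fun i => by
          simpa using DFunLike.congr_fun h i.castSucc)
        (finite_of_degree_eq _)

theorem exists_pow_lt_ncard_setOf_weight_eq [Infinite ι] (hw : ∀ i, w i ≠ 0)
    (hfin : ∀ D, {i | w i ≤ D}.Finite) (g : ℕ) :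
    ∃ n, (n + 1) ^ g < {c : ι →₀ ℕ | weight w c = n}.ncard := by
  let e : Fin (g + 2) ↪ ι := Fin.valEmbedding.trans (Infinite.natEmbedding ι)
  let L := ∏ j, w (e j)
  have hL : L ≠ 0 := Finset.prod_ne_zero_iff.mpr fun j _ => hw (e j)
  let s := ((g + 1) * L) ^ g
  refine ⟨(g + 1) * s * L, ?_⟩
  calc ((g + 1) * s * L + 1) ^ g = (s * ((g + 1) * L) + 1) ^ g := by ring_nf
    _ < (s + 1) ^ (g + 1) := Nat.pow_mul_add_one_pow_lt (by positivity) g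
    _ ≤ {t : Fin (g + 2) →₀ ℕ | degree t = (g + 1) * s}.ncard := pow_le_ncard_setOf_degree_eq _ _
    _ ≤ {d : Fin (g + 2) →₀ ℕ | weight (w ∘ e) d = (g + 1) * s * L}.ncard :=
        ncard_setOf_degree_eq_le_ncard_setOf_weight_eq_mul hL
          (fun j => Finset.dvd_prod_of_mem _ (Finset.mem_univ j)) _
    _ ≤ _ := ncard_setOf_weight_comp_le e (finite_setOf_weight_eq hw hfin _)

end Finsupp

open MvPolynomial Finsupp

section GradedAlgebra

variable {R A ι M : Type*} [CommSemiring R] [CommSemiring A] [Algebra R A]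
  [AddCommMonoid M] {𝒜 : M → Submodule R A} {a : ι → A} {d : ι → M}

theorem aeval_mem_of_isWeightedHomogeneous [SetLike.GradedMonoid 𝒜] (ha : ∀ i, a i ∈ 𝒜 (d i))
    {p : MvPolynomial ι R} {m : M} (hp : p.IsWeightedHomogeneous d m) : aeval a p ∈ 𝒜 m := by
  induction hp using IsWeightedHomogeneous.induction_on with
  | zero => simp
  | add p q _ _ hp hq => simpa using add_mem hp hq
  | monomial e r he =>
    rw [aeval_monomial, ← Algebra.smul_def, ← he, weight_apply, Finsupp.prod]
    exact Submodule.smul_mem _ r (SetLike.prod_pow_mem_graded _ _ _ _ fun i _ => ha i)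

theorem le_map_aeval_weightedHomogeneousSubmodule [DecidableEq M] [GradedAlgebra 𝒜]
    (ha : ∀ i, a i ∈ 𝒜 (d i)) (hgen : Algebra.adjoin R (Set.range a) = ⊤) (m : M) :
    𝒜 m ≤ (weightedHomogeneousSubmodule R d m).map (aeval a).toLinearMap := by
  let := weightedGradedAlgebra R d
  let f : weightedHomogeneousSubmodule R d →ₐᵍ[R] 𝒜 :=
    { aeval a with map_mem := fun {m} _ hp => aeval_mem_of_isWeightedHomogeneous ha hp }
  intro x hx
  obtain ⟨p, rfl⟩ : x ∈ (aeval (R := R) a).range := by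
    rw [← Algebra.adjoin_range_eq_range_aeval, hgen]; trivial
  refine ⟨_, (DirectSum.decompose (weightedHomogeneousSubmodule R d) p m).2, ?_⟩
  rw [AlgHom.toLinearMap_apply]
  exact (map_directSumDecompose _ 𝒜 f).trans (DirectSum.decompose_of_mem_same 𝒜 hx)

end GradedAlgebra

section Field

variable {K A ι : Type*} [Field K] [CommRing A] [Algebra K A] [Finite ι] {d : ι → ℕ}

theorem finrank_weightedHomogeneousSubmodule (hd : ∀ i, d i ≠ 0) (n : ℕ) :
    Module.finrank K (weightedHomogeneousSubmodule K d n) =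
      {c : ι →₀ ℕ | weight d c = n}.ncard := by
  have := (finite_of_nat_weight_eq d hd n).fintype
  rw [weightedHomogeneousSubmodule_eq_finsupp_supported,
    (AddMonoidAlgebra.supportedEquivFinsupp _).finrank_eq, Module.finrank_finsupp_self,
    ← Nat.card_eq_fintype_card, Nat.card_coe_set_eq]

theorem finrank_le_ncard_setOf_weight_eq {𝒜 : ℕ → Submodule K A} [GradedAlgebra 𝒜] {a : ι → A}
    (hd : ∀ i, d i ≠ 0) (ha : ∀ i, a i ∈ 𝒜 (d i)) (hgen : Algebra.adjoin K (Set.range a) = ⊤)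
    (n : ℕ) : Module.finrank K (𝒜 n) ≤ {c : ι →₀ ℕ | weight d c = n}.ncard := by
  have := Module.Finite.iff_fg.mpr (weightedHomogeneousSubmodule_fg K d hd n)
  calc Module.finrank K (𝒜 n)
      ≤ Module.finrank K ((weightedHomogeneousSubmodule K d n).map (aeval a).toLinearMap) :=
        Submodule.finrank_mono (le_map_aeval_weightedHomogeneousSubmodule ha hgen n)
    _ ≤ Module.finrank K (weightedHomogeneousSubmodule K d n) := Submodule.finrank_map_le _ _
    _ = _ := finrank_weightedHomogeneousSubmodule hd n

end Field

theorem List.finite_setOf_forall_pos_sum_le (D : ℕ) :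
    {l : List ℕ | (∀ i ∈ l, 0 < i) ∧ l.sum ≤ D}.Finite := by
  refine ((List.finite_length_le (Fin (D + 1)) D).image (List.map Fin.val)).subset ?_
  rintro l ⟨hpos, hsum⟩
  have hlt : ∀ i ∈ l, i < D + 1 := fun i hi =>
    Nat.lt_succ_of_le ((List.le_sum_of_mem hi).trans hsum)
  refine ⟨l.pmap Fin.mk hlt, ?_, ?_⟩
  · simpa using (l.length_le_sum_of_one_le hpos).trans hsum
  · simp [List.map_pmap]

def twoPowList : ℕ → List ℕ
  | 0 => []
  | r + 1 => 2 ^ r :: twoPowList r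

theorem length_twoPowList (r : ℕ) : (twoPowList r).length = r := by
  induction r with
  | zero => rfl
  | succ r ih => simp [twoPowList, ih]

theorem sum_twoPowList_add_one (r : ℕ) : (twoPowList r).sum + 1 = 2 ^ r := by
  induction r with
  | zero => rfl
  | succ r ih => rw [twoPowList, List.sum_cons, add_assoc, ih, pow_succ]; ring

theorem isAdmissible_twoPowList (r : ℕ) : IsAdmissible (twoPowList r) := by
  induction r with
  | zero => exact ⟨by simp [twoPowList], List.isChain_nil⟩
  | succ r ih =>
    refine ⟨List.forall_mem_cons.mpr ⟨by positivity, ih.1⟩, ?_⟩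
    cases r with
    | zero => exact List.isChain_singleton _
    | succ r => exact List.isChain_cons_cons.mpr ⟨by rw [pow_succ, mul_comm], ih.2⟩

theorem excess_twoPowList_le (r : ℕ) : excess (twoPowList r) ≤ 1 := by
  cases r with
  | zero => simp [twoPowList, excess]
  | succ r =>
    have := sum_twoPowList_add_one r
    simp only [twoPowList, excess]
    omega

def AdmBelow.twoPow {k : ℕ} (hk : 1 < k) (r : ℕ) : AdmBelow k :=
  ⟨twoPowList r, isAdmissible_twoPowList r,
    (excess_twoPowList_le r).trans_lt (by exact_mod_cast hk)⟩

theorem AdmBelow.twoPow_injective {k : ℕ} (hk : 1 < k) :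
    Function.Injective (AdmBelow.twoPow hk) := fun r s h => by
  simpa only [AdmBelow.twoPow, length_twoPowList] using
    congrArg (fun I : AdmBelow k => I.1.length) h

theorem finite_setOf_admWeight_le (k D : ℕ) : {I : AdmBelow k | admWeight k I ≤ D}.Finite :=
  ((List.finite_setOf_forall_pos_sum_le D).preimage Subtype.val_injective.injOn).subset
    fun I hI => ⟨I.2.1.1, (Nat.le_add_left _ k).trans hI⟩

/-- Fix an integer `k ≥ 2`.  Let `S` denote the set of admissible sequences `I`
(including the empty sequence) with excess `e(I) < k`, weighted by `w(I) = k + |I|`,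
and for `n ∈ ℕ` let `M_k(n)` denote the number of finitely supported functions
`c : S → ℕ` with `Σ_{I∈S} c(I)·(k + |I|) = n`.  Then:
(i) `S` is infinite, each weight `w(I) = k + |I|` is positive, for each `D` the set
`{I ∈ S : w(I) ≤ D}` is finite, and each `M_k(n)` is finite; and
(ii) for every commutative `ℕ`-graded algebra `A` over `F₂ = ℤ/2` generated as an
`F₂`-algebra by finitely many homogeneous elements of degree `≥ 1`, there exists
`n ∈ ℕ` with `M_k(n) > dim_{F₂} A_n`. -/
theorem serre_generators_beat_fg_graded_algebra (k : ℕ) (hk : 2 ≤ k) :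
    (Infinite (AdmBelow k) ∧
      (∀ I : AdmBelow k, 0 < admWeight k I) ∧
      (∀ D : ℕ, {I : AdmBelow k | admWeight k I ≤ D}.Finite) ∧
      (∀ n : ℕ,
        {c : AdmBelow k →₀ ℕ | (c.sum fun I m => m * admWeight k I) = n}.Finite)) ∧
    ∀ (A : Type) (_ : CommRing A) (_ : Algebra (ZMod 2) A)
      (𝒜 : ℕ → Submodule (ZMod 2) A) (_ : GradedAlgebra 𝒜)
      (g : ℕ) (a : Fin g → A),
      Algebra.adjoin (ZMod 2) (Set.range a) = ⊤ →
      (∀ i : Fin g, ∃ d : ℕ, 1 ≤ d ∧ a i ∈ 𝒜 d) →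
      ∃ n : ℕ,
        Module.finrank (ZMod 2) (𝒜 n) <
          {c : AdmBelow k →₀ ℕ | (c.sum fun I m => m * admWeight k I) = n}.ncard := by
  have hw : ∀ I : AdmBelow k, admWeight k I ≠ 0 := fun I => by unfold admWeight; omega
  have : Infinite (AdmBelow k) := Infinite.of_injective _ (AdmBelow.twoPow_injective hk)
  refine ⟨⟨this, fun I => Nat.pos_of_ne_zero (hw I), finite_setOf_admWeight_le k,
    finite_setOf_weight_eq hw (finite_setOf_admWeight_le k)⟩, ?_⟩
  intro A _ _ 𝒜 _ g a hgen hhom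
  choose d hd ha using hhom
  have hd₀ : ∀ i, d i ≠ 0 := fun i => Nat.one_le_iff_ne_zero.mp (hd i)
  obtain ⟨n, hn⟩ := exists_pow_lt_ncard_setOf_weight_eq hw (finite_setOf_admWeight_le k) g
  refine ⟨n, lt_of_le_of_lt ?_ hn⟩
  calc Module.finrank (ZMod 2) (𝒜 n) ≤ {c : Fin g →₀ ℕ | weight d c = n}.ncard :=
        finrank_le_ncard_setOf_weight_eq hd₀ ha hgen n
    _ ≤ (n + 1) ^ g := by simpa using ncard_setOf_weight_eq_le hd₀ n
end
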